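/- For the space 𝔛 built from 𝔛_n = 𝔖_{n, d_n, 2} with d_n = k (for fixed 1 < k ≤ 2) via the disjoint-union construction with k_0 = 2: for p ∈ [1,∞), the weak (p,p) constant c^c_𝔛(k′,p) is infinite for every k′ < k (since c^c_{𝔛_n}(k′,p) ≳ n^{1/p} → ∞), and c_𝔛(k′,p) < ∞ for every k′ ≥ k. -/

import Mathlib

open scoped ENNReal Classical

/-- The distance on the space `𝔛` obtained by gluing (with `k₀ = 2`, inter-component
distance `3`) the rescaled basic spaces `𝔛_n = 𝔖_{τ_n, d_n, m_n}` with `τ_n = n`, `d_n = k`,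
`m_n = 2`. A point `(n, i)` with `1 ≤ i ≤ n + 1` is the point `x_i` of the `n`-th basic
space (rescaled to diameter `≤ 1`), `(n, 0)` is its center `x_0`; points `(n, i)` with
`i > n + 1` are phantom points of measure `0`. -/
noncomputable def DU (k : ℝ) : ℕ × ℕ → ℕ × ℕ → ℝ := fun x y =>
  if x.1 = y.1 then
    (if x.2 = y.2 then 0 else if x.2 = 0 ∨ y.2 = 0 then 1 / 2 else k / 2)
  else 3

/-- The measure of `𝔛`, rescaled so that the `n`-th component has total mass `2^(-n)`. -/
noncomputable def wU : ℕ × ℕ → ℝ≥0∞ := fun x =>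
  if x.2 ≤ x.1 + 1 then
    (if x.2 = 0 then (2 : ℝ≥0∞) ^ (-(x.1 : ℤ)) / (2 * x.1 + 3)
      else 2 * ((2 : ℝ≥0∞) ^ (-(x.1 : ℤ)) / (2 * x.1 + 3)))
  else 0

/-- Open balls of `𝔛`. -/
noncomputable def ballU (k : ℝ) (c : ℕ × ℕ) (r : ℝ) : Set (ℕ × ℕ) := {y | DU k c y < r}

/-- The centered modified maximal operator `M_{k'}^c` on `𝔛`. -/
noncomputable def McU (k k' : ℝ) (f : ℕ × ℕ → ℝ≥0∞) (x : ℕ × ℕ) : ℝ≥0∞ :=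
  ⨆ (r : ℝ) (_ : 0 < r),
    (∑' y : ballU k x r, f y.val * wU y.val) / (∑' y : ballU k x (k' * r), wU y.val)

/-- The non-centered modified maximal operator `M_{k'}` on `𝔛`. -/
noncomputable def MU (k k' : ℝ) (f : ℕ × ℕ → ℝ≥0∞) (x : ℕ × ℕ) : ℝ≥0∞ :=
  ⨆ (c : ℕ × ℕ) (r : ℝ) (_ : 0 < r) (_ : x ∈ ballU k c r),
    (∑' y : ballU k c r, f y.val * wU y.val) / (∑' y : ballU k c (k' * r), wU y.val)

/-!
Each ball `B(c, r)` of `𝔛` lies in a fiber of one of three maps, chosen by `r`: the identity for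
`r ≤ 1/2`, the projection to the component index for `1/2 < r ≤ 3`, a constant map beyond `3`.
When `k ≤ k'` the dilated ball `B(c, k' r)` contains that whole fiber, so `M_{k'} f` is at most
the largest of the three fiber averages of `f`, and each fiber average is of weak type `(p, p)`
with constant `1` by Hölder's inequality.

When `k' < k`, a radius `r` with `1/2 < r ≤ k' r = k/2` makes both `B(x_i, r)` and
`B(x_i, k' r)` equal to `{x_0, x_i}` in the `n`-th component. Hence `M^c_{k'}` of the indicator
of `x_0` is `1/3` at all `n + 1` points `x_i`, whose total mass is `2 (n + 1)` times that of
`x_0`; this forces the weak constant to be at least of order `n^{1/p}`.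
-/

open MeasureTheory

section FiberAverage

variable {α β : Type*}

theorem ENNReal.tsum_pair (g : α → ℝ≥0∞) {a b : α} (h : a ≠ b) :
    ∑' y : ({a, b} : Set α), g y = g a + g b := by
  rw [← Finset.coe_pair, Finset.tsum_subtype', Finset.sum_pair h]

noncomputable def fiberAverage (π : α → β) (w f : α → ℝ≥0∞) (b : β) : ℝ≥0∞ :=
  (∑' y : π ⁻¹' {b}, f y * w y) / ∑' y : π ⁻¹' {b}, w y

theorem mul_rpow_one_div_le_iff {p : ℝ} (hp : 0 < p) (a b c : ℝ≥0∞) :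
    a * b ^ (1 / p) ≤ c ↔ a ^ p * b ≤ c ^ p := by
  have h : a * b ^ (1 / p) = (a ^ p * b) ^ (1 / p) := by
    rw [ENNReal.mul_rpow_of_nonneg _ _ (by positivity), ← ENNReal.rpow_mul,
      mul_one_div_cancel hp.ne', ENNReal.rpow_one]
  rw [h, one_div, ENNReal.rpow_inv_le_iff hp]

theorem tsum_mul_le_Lp_mul_tsum_rpow {p : ℝ} (hp : 1 ≤ p) (f w : α → ℝ≥0∞) :
    ∑' a, f a * w a ≤ (∑' a, f a ^ p * w a) ^ (1 / p) * (∑' a, w a) ^ (1 - 1 / p) := by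
  rcases hp.eq_or_lt with rfl | hp
  · simp
  have hp0 : 0 < p := by linarith
  let _ : MeasurableSpace α := ⊤
  have hpq := Real.HolderConjugate.conjExponent hp
  set q := p.conjExponent
  have hexp : 1 / p + 1 / q = 1 := by rw [one_div, one_div]; exact hpq.inv_add_inv_eq_one
  have key := ENNReal.lintegral_mul_le_Lp_mul_Lq Measure.count hpq
    (f := fun a => f a * w a ^ (1 / p)) (g := fun a => w a ^ (1 / q))
    (Measurable.of_discrete).aemeasurable (Measurable.of_discrete).aemeasurable
  simp only [Pi.mul_apply, lintegral_count] at key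
  have e₁ (a : α) : f a * w a ^ (1 / p) * w a ^ (1 / q) = f a * w a := by
    rw [mul_assoc, ← ENNReal.rpow_add_of_nonneg _ _ (by positivity)
      (one_div_nonneg.2 hpq.symm.nonneg), hexp, ENNReal.rpow_one]
  have e₂ (a : α) : (f a * w a ^ (1 / p)) ^ p = f a ^ p * w a := by
    rw [ENNReal.mul_rpow_of_nonneg _ _ (by positivity), ← ENNReal.rpow_mul,
      one_div_mul_cancel hp0.ne', ENNReal.rpow_one]
  have e₃ (a : α) : (w a ^ (1 / q)) ^ q = w a := by
    rw [← ENNReal.rpow_mul, one_div_mul_cancel hpq.symm.pos.ne', ENNReal.rpow_one]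
  simp only [e₁, e₂, e₃] at key
  rwa [show 1 / q = 1 - 1 / p by linarith] at key

-- No finiteness is assumed: if `∑' a, w a` is `0` or `∞`, the quotient in `h` is `0`.
theorem rpow_mul_tsum_le_of_lt_div {p : ℝ} (hp : 1 ≤ p) {f w : α → ℝ≥0∞} {lam : ℝ≥0∞}
    (h : lam < (∑' a, f a * w a) / ∑' a, w a) : lam ^ p * ∑' a, w a ≤ ∑' a, f a ^ p * w a := by
  set W := ∑' a, w a
  have hq : 0 ≤ 1 - 1 / p := sub_nonneg.2 ((div_le_one (by linarith)).2 hp)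
  have hW0 : W ≠ 0 := by
    intro hW
    have hw : ∀ a, w a = 0 := ENNReal.tsum_eq_zero.1 hW
    simp [hW, hw] at h
  have hWt : W ≠ ∞ := by
    intro hW
    simp [hW] at h
  have hlt : lam * W < ∑' a, f a * w a :=
    (ENNReal.lt_div_iff_mul_lt (.inl hW0) (.inl hWt)).1 h
  have hsplit : W = W ^ (1 / p) * W ^ (1 - 1 / p) := by
    rw [← ENNReal.rpow_add_of_nonneg _ _ (by positivity) hq,
      add_sub_cancel, ENNReal.rpow_one]
  have hWq0 : W ^ (1 - 1 / p) ≠ 0 := (ENNReal.rpow_pos (pos_iff_ne_zero.2 hW0) hWt).ne'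
  have hWqt : W ^ (1 - 1 / p) ≠ ∞ := ENNReal.rpow_ne_top_of_nonneg hq hWt
  have hroot : lam * W ^ (1 / p) ≤ (∑' a, f a ^ p * w a) ^ (1 / p) := by
    rw [← ENNReal.mul_le_mul_iff_left hWq0 hWqt, mul_assoc, ← hsplit]
    exact hlt.le.trans (tsum_mul_le_Lp_mul_tsum_rpow hp f w)
  rwa [mul_rpow_one_div_le_iff (by linarith), ← ENNReal.rpow_mul,
    one_div_mul_cancel (by linarith), ENNReal.rpow_one] at hroot

theorem rpow_mul_tsum_lt_fiberAverage_le {p : ℝ} (hp : 1 ≤ p) (π : α → β) (w f : α → ℝ≥0∞)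
    (lam : ℝ≥0∞) :
    lam ^ p * ∑' x : {x | lam < fiberAverage π w f (π x)}, w x ≤ ∑' x, f x ^ p * w x := by
  set S := {x | lam < fiberAverage π w f (π x)}
  rw [← ENNReal.tsum_fiberwise (fun x => f x ^ p * w x) π, tsum_subtype S w,
    ← ENNReal.tsum_fiberwise _ π, ← ENNReal.tsum_mul_left]
  refine ENNReal.tsum_le_tsum fun b => ?_
  have hfib (x : π ⁻¹' {b}) : x.1 ∈ S ↔ lam < fiberAverage π w f b := by
    show lam < fiberAverage π w f (π x) ↔ _
    rw [show π x = b from x.2]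
  by_cases hb : lam < fiberAverage π w f b
  · simp only [Set.indicator_of_mem ((hfib _).2 hb)]
    exact rpow_mul_tsum_le_of_lt_div hp hb
  · simp [Set.indicator_of_notMem (mt (hfib _).1 hb)]

theorem div_le_fiberAverage {π : α → β} {w f : α → ℝ≥0∞} {b : β} {s t : Set α}
    (hs : s ⊆ π ⁻¹' {b}) (ht : π ⁻¹' {b} ⊆ t) :
    (∑' y : s, f y * w y) / (∑' y : t, w y) ≤ fiberAverage π w f b :=
  ENNReal.div_le_div (ENNReal.tsum_mono_subtype (fun y => f y * w y) hs)
    (ENNReal.tsum_mono_subtype _ ht)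

end FiberAverage

section Balls

variable {k r : ℝ} {c : ℕ × ℕ}

theorem ballU_eq_singleton (hk : 1 ≤ k) (hr0 : 0 < r) (hr : r ≤ 1 / 2) : ballU k c r = {c} := by
  ext y
  simp only [ballU, DU, Set.mem_ofPred_eq, Set.mem_singleton_iff]
  constructor
  · intro h
    split_ifs at h with h₁ h₂
    · exact (Prod.ext h₁ h₂).symm
    all_goals linarith
  · rintro rfl
    simpa using hr0

theorem ballU_subset_fiber (hr : r ≤ 3) : ballU k c r ⊆ Prod.fst ⁻¹' {c.1} := by
  intro y hy
  by_contra h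
  simp only [ballU, DU, Set.mem_ofPred_eq] at hy
  rw [if_neg (Ne.symm h)] at hy
  linarith

theorem fiber_subset_ballU (hk : 1 ≤ k) (hr : k / 2 < r) : Prod.fst ⁻¹' {c.1} ⊆ ballU k c r := by
  intro y hy
  simp only [ballU, DU, Set.mem_ofPred_eq, if_pos (Eq.symm hy)]
  split_ifs <;> linarith

theorem ballU_eq_univ (hk : k / 2 < r) (hr : 3 < r) : ballU k c r = Set.univ := by
  refine Set.eq_univ_of_forall fun y => ?_
  simp only [ballU, DU, Set.mem_ofPred_eq]
  split_ifs <;> linarith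

theorem ballU_eq_pair {n i : ℕ} (hi : i ≠ 0) (hr : 1 / 2 < r) (hrk : r ≤ k / 2) (hr3 : r ≤ 3) :
    ballU k (n, i) r = {(n, 0), (n, i)} := by
  ext ⟨m, j⟩
  simp only [ballU, DU, Set.mem_ofPred_eq, Set.mem_insert_iff, Set.mem_singleton_iff,
    Prod.mk.injEq]
  split_ifs with hm hij hj0
  · subst hm hij; simp only [true_and, or_true, iff_true]; linarith
  · have hj : j = 0 := hj0.resolve_left hi
    subst hm hj; simp only [true_and, true_or, iff_true]; linarith
  · exact iff_of_false (by linarith) (by omega)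
  · exact iff_of_false (by linarith) (by omega)

end Balls

theorem MU_le_fiberAverage {k k' : ℝ} (hk1 : 1 ≤ k) (hk2 : k / 2 ≤ 3) (hk' : k ≤ k')
    (f : ℕ × ℕ → ℝ≥0∞) (x : ℕ × ℕ) :
    MU k k' f x ≤ fiberAverage id wU f x ⊔ fiberAverage Prod.fst wU f x.1 ⊔
      fiberAverage (fun _ => ()) wU f () := by
  refine iSup_le fun c => iSup_le fun r => iSup_le fun hr => iSup_le fun hx => ?_
  have hkr : k * r ≤ k' * r := by gcongr
  rcases le_or_gt r (1 / 2) with h₁ | h₁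
  · have hb := ballU_eq_singleton hk1 hr h₁ (c := c)
    obtain rfl : x = c := by rw [hb] at hx; exact hx
    refine le_sup_of_le_left (le_sup_of_le_left (div_le_fiberAverage ?_ ?_))
    · simp [hb]
    · simp only [Set.preimage_id, Set.singleton_subset_iff]
      show DU k x x < k' * r
      simp only [DU, if_true]
      nlinarith
  rcases le_or_gt r 3 with h₂ | h₂
  · have hsub := ballU_subset_fiber h₂ (k := k) (c := c)
    rw [show x.1 = c.1 from hsub hx]
    exact le_sup_of_le_left (le_sup_of_le_right
      (div_le_fiberAverage hsub (fiber_subset_ballU hk1 (by nlinarith))))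
  · refine le_sup_of_le_right (div_le_fiberAverage (fun _ _ => rfl) ?_)
    rw [ballU_eq_univ (by nlinarith) (by nlinarith)]
    exact Set.subset_univ _

theorem MU_weakType {k k' p : ℝ} (hk1 : 1 ≤ k) (hk2 : k / 2 ≤ 3) (hk' : k ≤ k') (hp : 1 ≤ p)
    (f : ℕ × ℕ → ℝ≥0∞) (lam : ℝ≥0∞) :
    lam * (∑' y : {x | lam < MU k k' f x}, wU y.val) ^ (1 / p)
      ≤ 3 * (∑' x, f x ^ p * wU x) ^ (1 / p) := by
  have hp0 : 0 < p := by linarith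
  set J := ∑' x, f x ^ p * wU x
  rw [mul_rpow_one_div_le_iff hp0, ENNReal.mul_rpow_of_nonneg _ _ hp0.le, ← ENNReal.rpow_mul,
    one_div_mul_cancel hp0.ne', ENNReal.rpow_one]
  set S₁ := {x | lam < fiberAverage id wU f (id x)}
  set S₂ := {x : ℕ × ℕ | lam < fiberAverage Prod.fst wU f x.1}
  set S₃ := {x : ℕ × ℕ | lam < fiberAverage (fun _ => ()) wU f ()}
  have hsub : {x | lam < MU k k' f x} ⊆ S₁ ∪ S₂ ∪ S₃ := by
    intro x hx
    have h := hx.trans_le (MU_le_fiberAverage hk1 hk2 hk' f x)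
    simp only [lt_sup_iff] at h
    exact h
  have hunion : ∑' y : {x | lam < MU k k' f x}, wU y
      ≤ ∑' y : S₁, wU y + ∑' y : S₂, wU y + ∑' y : S₃, wU y :=
    calc _ ≤ ∑' y : ↑(S₁ ∪ S₂ ∪ S₃), wU y := ENNReal.tsum_mono_subtype _ hsub
      _ ≤ ∑' y : ↑(S₁ ∪ S₂), wU y + ∑' y : S₃, wU y := ENNReal.tsum_union_le _ _ _
      _ ≤ _ := by gcongr; exact ENNReal.tsum_union_le _ _ _
  calc lam ^ p * ∑' y : {x | lam < MU k k' f x}, wU y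
      ≤ lam ^ p * ∑' y : S₁, wU y + lam ^ p * ∑' y : S₂, wU y + lam ^ p * ∑' y : S₃, wU y := by
        rw [← mul_add, ← mul_add]; gcongr
    _ ≤ J + J + J := by
        gcongr <;> exact rpow_mul_tsum_lt_fiberAverage_le hp _ _ _ _
    _ = 3 * J := by ring
    _ ≤ 3 ^ p * J := by gcongr; exact ENNReal.le_rpow_self_of_one_le (by norm_num) hp

theorem wU_center_ne_zero (n : ℕ) : wU (n, 0) ≠ 0 := by
  simp [wU, ENNReal.div_eq_zero_iff, (ENNReal.zpow_pos two_ne_zero ENNReal.ofNat_ne_top _).ne',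
    ENNReal.mul_eq_top]

theorem wU_center_ne_top (n : ℕ) : wU (n, 0) ≠ ∞ := by
  simp [wU, ENNReal.div_eq_top, ENNReal.zpow_ne_top two_ne_zero ENNReal.ofNat_ne_top]

theorem wU_eq_two_mul_center {n i : ℕ} (hi : i ≠ 0) (hin : i ≤ n + 1) :
    wU (n, i) = 2 * wU (n, 0) := by
  simp [wU, hi, hin]

theorem inv_three_le_McU_indicator {k k' : ℝ} (hk'1 : 1 ≤ k') (hk' : k' < k) (hk : k / 2 ≤ 3)
    {n i : ℕ} (hi : i ≠ 0) (hin : i ≤ n + 1) :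
    3⁻¹ ≤ McU k k' (Set.indicator {(n, 0)} 1) (n, i) := by
  set r := k / (2 * k')
  have hr : 1 / 2 < r := by rw [lt_div_iff₀ (by positivity)]; linarith
  have hrk : r ≤ k / 2 := by
    rw [div_le_div_iff₀ (by positivity) two_pos]; nlinarith
  have hk'r : k' * r = k / 2 := by simp only [r]; field_simp
  have hpair {s : ℝ} (h₁ : 1 / 2 < s) (h₂ : s ≤ k / 2) : ballU k (n, i) s = {(n, 0), (n, i)} :=
    ballU_eq_pair hi h₁ h₂ (by linarith)
  have hne : ((n, 0) : ℕ × ℕ) ≠ (n, i) := by simpa using Ne.symm hi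
  refine le_iSup₂_of_le r (by positivity) (le_of_eq ?_)
  rw [hk'r, hpair hr hrk, hpair (by linarith) le_rfl,
    ENNReal.tsum_pair (fun y => Set.indicator {((n, 0) : ℕ × ℕ)} 1 y * wU y) hne,
    ENNReal.tsum_pair wU hne, wU_eq_two_mul_center hi hin]
  have h3 : wU (n, 0) + 2 * wU (n, 0) = 3 * wU (n, 0) := by ring
  simp only [Set.indicator_of_mem (Set.mem_singleton _), Set.indicator_of_notMem
    (show (n, i) ∉ ({(n, 0)} : Set (ℕ × ℕ)) from Ne.symm hne), Pi.one_apply, one_mul, zero_mul,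
    add_zero, h3]
  rw [ENNReal.div_eq_inv_mul, ENNReal.mul_inv (.inl (by norm_num)) (.inl (by norm_num)),
    mul_assoc, ENNReal.inv_mul_cancel (wU_center_ne_zero n) (wU_center_ne_top n), mul_one]

theorem two_mul_succ_mul_wU_le_tsum {S : Set (ℕ × ℕ)} (n : ℕ)
    (hS : ∀ i, i ≠ 0 → i ≤ n + 1 → (n, i) ∈ S) :
    2 * (n + 1) * wU (n, 0) ≤ ∑' y : S, wU y := by
  set F := (Finset.Icc 1 (n + 1)).map ⟨Prod.mk n, Prod.mk_right_injective n⟩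
  have hF : (F : Set (ℕ × ℕ)) ⊆ S := by
    intro y hy
    obtain ⟨i, hi, rfl⟩ := Finset.mem_map.1 hy
    rw [Finset.mem_Icc] at hi
    exact hS i (by omega) hi.2
  calc 2 * (n + 1) * wU (n, 0) = ∑ y ∈ F, wU y := by
        rw [Finset.sum_map]
        simp only [Function.Embedding.coeFn_mk]
        rw [Finset.sum_congr rfl fun i hi => wU_eq_two_mul_center
          (Nat.one_le_iff_ne_zero.1 (Finset.mem_Icc.1 hi).1) (Finset.mem_Icc.1 hi).2,
          Finset.sum_const, Nat.card_Icc, nsmul_eq_mul]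
        push_cast
        ring
    _ = ∑' y : (F : Set (ℕ × ℕ)), wU y := (Finset.tsum_subtype' F wU).symm
    _ ≤ ∑' y : S, wU y := ENNReal.tsum_mono_subtype wU hF

theorem McU_not_weakType {k k' p : ℝ} (hk'1 : 1 ≤ k') (hk' : k' < k) (hk : k / 2 ≤ 3) (hp : 0 < p)
    {C : ℝ≥0∞} (hC : C ≠ ∞) :
    ¬ ∀ (f : ℕ × ℕ → ℝ≥0∞) (lam : ℝ≥0∞),
        lam * (∑' y : {x : ℕ × ℕ | lam < McU k k' f x}, wU y.val) ^ (1 / p)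
          ≤ C * (∑' x : ℕ × ℕ, f x ^ p * wU x) ^ (1 / p) := by
  intro h
  obtain ⟨n, hn⟩ := ENNReal.exists_nat_gt
    (ENNReal.rpow_ne_top_of_nonneg hp.le (ENNReal.mul_ne_top (by norm_num) hC) :
      (4 * C) ^ p ≠ ∞)
  set f : ℕ × ℕ → ℝ≥0∞ := Set.indicator {(n, 0)} 1
  have hJ : ∑' x, f x ^ p * wU x = wU (n, 0) := by
    rw [tsum_eq_single (n, 0) fun x hx => by simp [f, hx, ENNReal.zero_rpow_of_pos hp]]
    simp [f]
  have hE : 2 * (n + 1) * wU (n, 0) ≤ ∑' y : {x | 4⁻¹ < McU k k' f x}, wU y :=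
    two_mul_succ_mul_wU_le_tsum n fun i hi hin =>
      (ENNReal.inv_lt_inv.2 (by norm_num)).trans_le
        (inv_three_le_McU_indicator hk'1 hk' hk hi hin)
  have key := (mul_rpow_one_div_le_iff hp _ _ _).1 (h f 4⁻¹)
  rw [hJ, ENNReal.mul_rpow_of_nonneg _ _ hp.le, ← ENNReal.rpow_mul, one_div_mul_cancel hp.ne',
    ENNReal.rpow_one] at key
  have h4 : (4 : ℝ≥0∞) ^ p * 4⁻¹ ^ p = 1 := by
    rw [← ENNReal.mul_rpow_of_nonneg _ _ hp.le,
      ENNReal.mul_inv_cancel (by norm_num) (by norm_num), ENNReal.one_rpow]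
  have hbound : 2 * (n + 1) * wU (n, 0) ≤ (4 * C) ^ p * wU (n, 0) :=
    calc 2 * (n + 1) * wU (n, 0)
        ≤ 4 ^ p * (4⁻¹ ^ p * ∑' y : {x | 4⁻¹ < McU k k' f x}, wU y) := by
          rw [← mul_assoc, h4, one_mul]; exact hE
      _ ≤ 4 ^ p * (C ^ p * wU (n, 0)) := by gcongr
      _ = (4 * C) ^ p * wU (n, 0) := by rw [ENNReal.mul_rpow_of_nonneg _ _ hp.le, mul_assoc]
  have hn' : (n : ℝ≥0∞) ≤ (4 * C) ^ p :=
    calc (n : ℝ≥0∞) ≤ 2 * (n + 1) :=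
          le_self_add.trans (le_mul_of_one_le_left zero_le (by norm_num))
      _ ≤ (4 * C) ^ p :=
          (ENNReal.mul_le_mul_iff_left (wU_center_ne_zero n) (wU_center_ne_top n)).1 hbound
  exact absurd hn (not_lt.2 hn')

/-- For the space `𝔛` built from the basic spaces `𝔖_{n,k,2}` (fixed `1 < k ≤ 2`) via the
disjoint-union construction with `k₀ = 2`: for `p ∈ [1,∞)`, the weak `(p,p)` constant of the
centered operator `M_{k'}^c` is infinite for every `1 ≤ k' < k`, while the non-centered
operator `M_{k'}` has a finite weak `(p,p)` constant for every `k' ≥ k`. -/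
theorem stmt18 (k p : ℝ) (hk1 : 1 < k) (hk2 : k ≤ 2) (hp : 1 ≤ p) :
    (∀ k', 1 ≤ k' → k' < k → ∀ C : ℝ≥0∞, C ≠ ∞ →
      ¬ (∀ (f : ℕ × ℕ → ℝ≥0∞) (lam : ℝ≥0∞),
          lam * (∑' y : {x : ℕ × ℕ | lam < McU k k' f x}, wU y.val) ^ (1 / p)
            ≤ C * (∑' x : ℕ × ℕ, f x ^ p * wU x) ^ (1 / p))) ∧
    (∀ k', k ≤ k' → ∃ C : ℝ≥0∞, C ≠ ∞ ∧
      ∀ (f : ℕ × ℕ → ℝ≥0∞) (lam : ℝ≥0∞),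
        lam * (∑' y : {x : ℕ × ℕ | lam < MU k k' f x}, wU y.val) ^ (1 / p)
          ≤ C * (∑' x : ℕ × ℕ, f x ^ p * wU x) ^ (1 / p)) := by
  refine ⟨fun k' hk'1 hk' C hC => McU_not_weakType hk'1 hk' (by linarith) (by linarith) hC,
    fun k' hk' => ⟨3, by norm_num, MU_weakType hk1.le (by linarith) hk' hp⟩⟩
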